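/- arXiv:math/0410539 — 2 statements merged into one kernel-verified Lean document; each statement's English description precedes it below -/
import Mathlib

section
/- Let c be a cell of UD^nΓ containing an edge e of T, and let c_ι be the cell obtained from c by replacing e with ι(e). If c is the principal elementary reduction of c_ι (that is, ι(e) is the smallest unblocked vertex of c_ι), then e is an order-respecting edge of c. -/
open SimpleGraph

attribute [local instance] Classical.propDecidable

namespace GraphBraid

/-- The degree of a vertex, defined via `Set.ncard` to avoid decidability assumptions. -/
noncomputable def ncdeg {V : Type} (H : SimpleGraph V) (v : V) : ℕ := (H.neighborSet v).ncard

/-- The basic setup: a finite connected simple graph `G` with a spanning tree `T`,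
a root `root` of degree one in `T`, and a labelling of the edges of `T` incident to each
vertex `u` by the numbers `0, …, d_T(u) - 1`, where the edge towards the root receives the
label `0` (and the unique edge at the root receives the label `1`). -/
structure Setup (V : Type) [Fintype V] [DecidableEq V] where
  G : SimpleGraph V
  G_conn : G.Connected
  T : SimpleGraph V
  T_le : T ≤ G
  T_tree : T.IsTree
  root : V
  root_deg : ncdeg T root = 1
  label : V → V → ℕ
  label_bij : ∀ u : V, u ≠ root → Set.BijOn (label u) (T.neighborSet u) (Set.Iio (ncdeg T u))
  label_zero : ∀ u : V, u ≠ root → ∀ w : V, T.Adj u w →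
    (label u w = 0 ↔ T.dist root w + 1 = T.dist root u)
  label_root : ∀ w : V, T.Adj root w → label root w = 1

namespace Setup

variable {V : Type} [Fintype V] [DecidableEq V] (S : Setup V)

/-- The unique geodesic (path) in the tree `T` from `u` to `w`. -/
noncomputable def geod (u w : V) : S.T.Walk u w := (S.T_tree.existsUnique_path u w).choose

/-- `g(u,w)`: the label at `u` of the first edge of the tree geodesic from `u` to `w`,
with `g(u,u) = 0`. -/
noncomputable def gfun (u w : V) : ℕ :=
  if u = w then 0 else S.label u ((S.geod u w).getVert 1)

lemma exists_wedge (u w : V) :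
    ∃ x : V, (x ∈ (S.geod S.root u).support ∧ x ∈ (S.geod S.root w).support) ∧
      ∀ y : V, y ∈ (S.geod S.root u).support → y ∈ (S.geod S.root w).support →
        S.T.dist S.root y ≤ S.T.dist S.root x := by
  classical
  have hne : ((S.geod S.root u).support.toFinset ∩
      (S.geod S.root w).support.toFinset).Nonempty :=
    ⟨S.root, by simp [SimpleGraph.Walk.start_mem_support]⟩
  obtain ⟨x, hx, hmax⟩ := Finset.exists_max_image _ (fun y => S.T.dist S.root y) hne
  simp only [Finset.mem_inter, List.mem_toFinset] at hx hmax
  exact ⟨x, ⟨hx.1, hx.2⟩, fun y h1 h2 => hmax y ⟨h1, h2⟩⟩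

/-- `u ∧ w`: the vertex farthest from the root lying on both tree geodesics from the
root to `u` and from the root to `w`. -/
noncomputable def wedge (u w : V) : V := (S.exists_wedge u w).choose

/-- The order on vertices: `u ≤ w` iff `u ∧ w = u`, or `u ∧ w ≠ u` and
`g(u ∧ w, u) < g(u ∧ w, w)`. -/
def vle (u w : V) : Prop :=
  S.wedge u w = u ∨ (S.wedge u w ≠ u ∧ S.gfun (S.wedge u w) u < S.gfun (S.wedge u w) w)

/-- The associated strict order on vertices. -/
def vlt (u w : V) : Prop := S.vle u w ∧ u ≠ w

/-- `ι(e)`: the larger endpoint of the edge `e` in the vertex order. -/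
noncomputable def iota (e : Sym2 V) : V :=
  if S.vle (Quot.out e).1 (Quot.out e).2 then (Quot.out e).2 else (Quot.out e).1

/-- `τ(e)`: the smaller endpoint of the edge `e` in the vertex order. -/
noncomputable def tau (e : Sym2 V) : V :=
  if S.vle (Quot.out e).1 (Quot.out e).2 then (Quot.out e).1 else (Quot.out e).2

/-- `e(v)`: the edge of `T` incident to `v` lying on the tree geodesic from `v` to the root. -/
noncomputable def eV (v : V) : Sym2 V := s(v, (S.geod v S.root).getVert 1)

/-- A cell of `UD^n Γ`: an `n`-element set whose elements are vertices (encoded as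
diagonal elements of `Sym2 V`) and closed edges of `G`, no two distinct elements of which
share a vertex. -/
def IsCell (n : ℕ) (c : Finset (Sym2 V)) : Prop :=
  c.card = n ∧ (∀ s ∈ c, s.IsDiag ∨ s ∈ S.G.edgeSet) ∧
    ∀ s ∈ c, ∀ t ∈ c, s ≠ t → ∀ x : V, x ∈ s → x ∉ t

/-- The dimension of a cell: the number of edges it contains. -/
noncomputable def dim (c : Finset (Sym2 V)) : ℕ := (c.filter (fun s => ¬ s.IsDiag)).card

/-- A vertex `v` is blocked in `c` if `v` is the root, or `e(v)` shares a vertex with some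
element of `c` other than `v`. -/
def Blocked (c : Finset (Sym2 V)) (v : V) : Prop :=
  v = S.root ∨ ∃ s ∈ c, s ≠ Sym2.diag v ∧ ∃ x : V, x ∈ S.eV v ∧ x ∈ s

/-- A vertex `v` is unblocked in `c` if it belongs to `c` and is not blocked. -/
def Unblocked (c : Finset (Sym2 V)) (v : V) : Prop := Sym2.diag v ∈ c ∧ ¬ S.Blocked c v

/-- The elementary reduction of `c` from the vertex `v`: replace `v` by the edge `e(v)`. -/
noncomputable def redFrom (c : Finset (Sym2 V)) (v : V) : Finset (Sym2 V) :=
  insert (S.eV v) (c.erase (Sym2.diag v))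

/-- `c'` is the principal elementary reduction of `c`: it is the elementary reduction of `c`
from the smallest unblocked vertex of `c`. -/
def PrincipalRedOf (c c' : Finset (Sym2 V)) : Prop :=
  ∃ v : V, S.Unblocked c v ∧ (∀ u : V, S.Unblocked c u → S.vle v u) ∧ c' = S.redFrom c v

/-- Auxiliary definition of redundancy, by induction on the dimension: a cell of
dimension `i` is redundant iff it has an unblocked vertex and it is not the principal
elementary reduction of a redundant cell of dimension `i - 1`. -/
def RedundantAux (n : ℕ) : ℕ → Finset (Sym2 V) → Prop
  | 0, c => ∃ v, S.Unblocked c v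
  | (i + 1), c => (∃ v, S.Unblocked c v) ∧
      ¬ ∃ c₀, S.IsCell n c₀ ∧ dim c₀ = i ∧ RedundantAux n i c₀ ∧ S.PrincipalRedOf c₀ c

/-- A cell is redundant if the discrete vector field `W` is defined on it. -/
def Redundant (n : ℕ) (c : Finset (Sym2 V)) : Prop := S.RedundantAux n (dim c) c

/-- A cell is collapsible if it lies in the image of `W`. -/
def Collapsible (n : ℕ) (c : Finset (Sym2 V)) : Prop :=
  ∃ c₀, S.IsCell n c₀ ∧ S.Redundant n c₀ ∧ S.PrincipalRedOf c₀ c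

/-- A cell is critical if it is neither redundant nor collapsible. -/
def Critical (n : ℕ) (c : Finset (Sym2 V)) : Prop :=
  ¬ S.Redundant n c ∧ ¬ S.Collapsible n c

/-- An edge `e` of the cell `c` is order-respecting in `c` if `e` lies in `T` and every
vertex `v ∈ c` such that `e(v)` and `e` share the vertex `τ(e)` satisfies `v > ι(e)`. -/
def OrderResp (c : Finset (Sym2 V)) (e : Sym2 V) : Prop :=
  e ∈ c ∧ e ∈ S.T.edgeSet ∧
    ∀ v : V, v ≠ S.root → Sym2.diag v ∈ c → S.tau e ∈ S.eV v → S.vlt (S.iota e) v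

/-- `e` is the minimal order-respecting edge of `c`. -/
def MinOrderResp (c : Finset (Sym2 V)) (e : Sym2 V) : Prop :=
  S.OrderResp c e ∧ ∀ e' : Sym2 V, S.OrderResp c e' → S.vle (S.iota e) (S.iota e')

/-- `c'` is a face of `c` obtained by replacing one edge of `c` by one of its endpoints. -/
def IsFace (c' c : Finset (Sym2 V)) : Prop :=
  ∃ (e : Sym2 V) (x : V), e ∈ c ∧ ¬ e.IsDiag ∧ x ∈ e ∧ c' = insert (Sym2.diag x) (c.erase e)

/-- `Γ` is sufficiently subdivided for `n`: every path between distinct vertices of degree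
`≠ 2` passes through at least `n - 1` edges, and every cycle has length at least `n + 1`. -/
def SuffSubdiv (n : ℕ) : Prop :=
  (∀ u v : V, u ≠ v → ncdeg S.G u ≠ 2 → ncdeg S.G v ≠ 2 →
    ∀ p : S.G.Walk u v, p.IsPath → n - 1 ≤ p.length) ∧
  (∀ v : V, ∀ p : S.G.Walk v v, p.IsCycle → n + 1 ≤ p.length)

end Setup

/-- **Order-respecting edges lemma (i).**  If the cell `c`, containing the edge `e` of `T`,
is the principal elementary reduction of the cell `c_ι` obtained from `c` by replacing `e`
with `ι(e)`, then `e` is an order-respecting edge of `c`. -/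
theorem stmt1 {V : Type} [Fintype V] [DecidableEq V] (S : Setup V) (n : ℕ) (hn : 1 ≤ n) (hsub : S.SuffSubdiv n)
    (c : Finset (Sym2 V)) (hc : S.IsCell n c)
    (e : Sym2 V) (he : e ∈ c) (heT : e ∈ S.T.edgeSet)
    (hpr : S.PrincipalRedOf (insert (Sym2.diag (S.iota e)) (c.erase e)) c) :
    S.OrderResp c e := by
  classical
  obtain ⟨w, hwu, hwmin, hcred⟩ := hpr
  have hediag : ¬ e.IsDiag := S.T.not_isDiag_of_mem_edgeSet heT
  have hout : s((Quot.out e).1, (Quot.out e).2) = e := by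
    exact Quot.out_eq e
  have hab : (Quot.out e).1 ≠ (Quot.out e).2 := by
    intro h; apply hediag; rw [← hout]; simp [h]
  have hm1 : (Quot.out e).1 ∈ e := Sym2.out_fst_mem e
  have hm2 : (Quot.out e).2 ∈ e := Sym2.out_snd_mem e
  have hiotamem : S.iota e ∈ e := by
    unfold Setup.iota; split
    · exact hm2
    · exact hm1
  have htaumem : S.tau e ∈ e := by
    unfold Setup.tau; split
    · exact hm1
    · exact hm2
  have hit : S.iota e ≠ S.tau e := by
    unfold Setup.iota Setup.tau
    split
    · exact hab.symm
    · exact hab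
  -- diag (iota e) ∉ c
  have hdiagnot : Sym2.diag (S.iota e) ∉ c := by
    intro hmem
    have hne : e ≠ Sym2.diag (S.iota e) := by
      intro h; exact hediag (h ▸ Sym2.diag_isDiag (S.iota e))
    exact hc.2.2 e he _ hmem hne (S.iota e) hiotamem (by simp [Sym2.diag])
  set cι := insert (Sym2.diag (S.iota e)) (c.erase e) with hcι
  -- w = iota e
  have hw : w = S.iota e := by
    by_contra hne
    have h1 : Sym2.diag (S.iota e) ∈ cι := Finset.mem_insert_self _ _
    have h2 : Sym2.diag (S.iota e) ∈ c := by
      rw [hcred]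
      exact Finset.mem_insert_of_mem (Finset.mem_erase.2
        ⟨fun h => hne (Sym2.diag_injective h).symm, h1⟩)
    exact hdiagnot h2
  refine ⟨he, heT, ?_⟩
  intro v hvroot hvc hτv
  -- v ∉ e
  have hdve : Sym2.diag v ≠ e := by
    intro h; exact hediag (h ▸ Sym2.diag_isDiag v)
  have hvnote : ∀ x : V, x ∈ e → x ≠ v := by
    intro x hx h
    subst h
    exact hc.2.2 _ hvc e he hdve x (by simp [Sym2.diag]) hx
  have hviota : v ≠ S.iota e := fun h => hvnote _ hiotamem h.symm
  have hvtau : v ≠ S.tau e := fun h => hvnote _ htaumem h.symm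
  -- eV v = s(v, tau e)
  have hEv : S.eV v = s(v, S.tau e) := by
    unfold Setup.eV at hτv ⊢
    rcases Sym2.mem_iff.1 hτv with h | h
    · exact absurd h.symm hvtau
    · rw [h]
  -- v is unblocked in cι
  have hvu : S.Unblocked cι v := by
    constructor
    · exact Finset.mem_insert_of_mem (Finset.mem_erase.2 ⟨hdve, hvc⟩)
    · rintro (h | ⟨s, hs, hsd, x, hx, hxs⟩)
      · exact hvroot h
      rw [hEv] at hx
      rcases Sym2.mem_iff.1 hx with hxv | hxτ
      · -- x = v
        subst hxv
        rcases Finset.mem_insert.1 hs with h | h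
        · subst h
          exact hviota (by simpa [Sym2.diag] using hxs)
        · have := Finset.mem_erase.1 h
          exact hc.2.2 _ hvc s this.2 (fun hh => hsd hh.symm) x (by simp [Sym2.diag]) hxs
      · -- x = tau e
        subst hxτ
        rcases Finset.mem_insert.1 hs with h | h
        · subst h
          have h2 : S.tau e = S.iota e := by simpa [Sym2.diag] using hxs
          exact hit h2.symm
        · have := Finset.mem_erase.1 h
          exact hc.2.2 e he s this.2 (Ne.symm this.1) (S.tau e) htaumem hxs
  refine ⟨hw ▸ hwmin v hvu, Ne.symm hviota⟩


end GraphBraid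
end

section
/- Let c be a cell of UD^nΓ containing an edge e of T, and let c_ι be the cell obtained from c by replacing e with ι(e). Then an edge e' of c with e' ≠ e is order-respecting in c if and only if e' is order-respecting in c_ι. -/
open SimpleGraph

attribute [local instance] Classical.propDecidable

namespace GraphBraid

namespace Setup

variable {V : Type} [Fintype V] [DecidableEq V] (S : Setup V)

lemma geod_isPath (u w : V) : (S.geod u w).IsPath :=
  (S.T_tree.existsUnique_path u w).choose_spec.1

lemma geod_unique {u w : V} (p : S.T.Walk u w) (hp : p.IsPath) : p = S.geod u w :=
  (S.T_tree.existsUnique_path u w).choose_spec.2 p hp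

lemma geod_length (u w : V) : (S.geod u w).length = S.T.dist u w := by
  have hreach : S.T.Reachable u w := S.T_tree.isConnected.preconnected u w
  have h1 : S.T.dist u w ≤ (S.geod u w).length := SimpleGraph.dist_le _
  obtain ⟨p, hp⟩ := hreach.exists_walk_length_eq_dist
  have h3 : p.bypass = S.geod u w := S.geod_unique _ p.bypass_isPath
  have h4 := p.length_bypass_le
  rw [h3] at h4
  omega

lemma geod_reverse (u w : V) : S.geod w u = (S.geod u w).reverse :=
  (S.geod_unique _ ((S.geod_isPath u w).reverse)).symm

lemma dist_le_of_mem_support {w y : V} (h : y ∈ (S.geod S.root w).support) :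
    S.T.dist S.root y ≤ S.T.dist S.root w := by
  have ht : ((S.geod S.root w).takeUntil y h).IsPath := (S.geod_isPath _ _).takeUntil h
  have he : ((S.geod S.root w).takeUntil y h) = S.geod S.root y := S.geod_unique _ ht
  have hlen := SimpleGraph.Walk.length_takeUntil_le (S.geod S.root w) h
  rw [he, S.geod_length, S.geod_length] at hlen
  exact hlen

lemma eq_of_mem_support_dist {w y : V} (h : y ∈ (S.geod S.root w).support)
    (hd : S.T.dist S.root w ≤ S.T.dist S.root y) : y = w := by
  have ht : ((S.geod S.root w).takeUntil y h).IsPath := (S.geod_isPath _ _).takeUntil h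
  have he : ((S.geod S.root w).takeUntil y h) = S.geod S.root y := S.geod_unique _ ht
  have hspec := (S.geod S.root w).take_spec h
  have hlen := congrArg SimpleGraph.Walk.length hspec
  rw [SimpleGraph.Walk.length_append] at hlen
  have h1 : ((S.geod S.root w).takeUntil y h).length = S.T.dist S.root y := by
    rw [he, S.geod_length]
  have h2 := S.geod_length S.root w
  have h0 : ((S.geod S.root w).dropUntil y h).length = 0 := by omega
  exact SimpleGraph.Walk.eq_of_length_eq_zero h0

/-- If `w` lies on the tree geodesic from the root to `u`, then `u ∧ w = w`. -/
lemma wedge_eq {u w : V} (h : w ∈ (S.geod S.root u).support) : S.wedge u w = w := by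
  obtain ⟨⟨h1, h2⟩, hmax⟩ := (S.exists_wedge u w).choose_spec
  have hge := hmax w h ((S.geod S.root w).end_mem_support)
  exact S.eq_of_mem_support_dist h2 hge

/-- If `w` lies on the tree geodesic from the root to `u`, then `w ∧ u = w`. -/
lemma wedge_eq' {u w : V} (h : w ∈ (S.geod S.root u).support) : S.wedge w u = w := by
  obtain ⟨⟨h1, h2⟩, hmax⟩ := (S.exists_wedge w u).choose_spec
  have hge := hmax w ((S.geod S.root w).end_mem_support) h
  exact S.eq_of_mem_support_dist h1 hge

/-- For adjacent vertices one of them is the parent of the other. -/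
lemma parent_dichotomy {a b : V} (hadj : S.T.Adj a b) :
    (S.geod a S.root).getVert 1 = b ∨ (S.geod b S.root).getVert 1 = a := by
  by_cases hmem : a ∈ (S.geod b S.root).support
  · right
    have htake : ((S.geod b S.root).takeUntil a hmem).IsPath :=
      (S.geod_isPath _ _).takeUntil hmem
    have hsingle : (SimpleGraph.Walk.cons hadj.symm SimpleGraph.Walk.nil : S.T.Walk b a).IsPath :=
      SimpleGraph.Walk.IsPath.nil.cons (by simp [hadj.ne'])
    have h1 : (SimpleGraph.Walk.cons hadj.symm SimpleGraph.Walk.nil : S.T.Walk b a)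
        = S.geod b a := S.geod_unique _ hsingle
    have h2 : ((S.geod b S.root).takeUntil a hmem) = S.geod b a := S.geod_unique _ htake
    have hspec := (S.geod b S.root).take_spec hmem
    rw [h2, ← h1] at hspec
    rw [← hspec]
    simp
  · left
    have hcons : (SimpleGraph.Walk.cons hadj (S.geod b S.root)).IsPath :=
      (S.geod_isPath b S.root).cons hmem
    have h1 : SimpleGraph.Walk.cons hadj (S.geod b S.root) = S.geod a S.root :=
      S.geod_unique _ hcons
    rw [← h1]
    simp

lemma mem_support_root_of_parent {a b : V} (hab : a ≠ b)
    (h : (S.geod a S.root).getVert 1 = b) : b ∈ (S.geod S.root a).support := by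
  have haroot : a ≠ S.root := by
    rintro rfl
    have hnil : (SimpleGraph.Walk.nil : S.T.Walk S.root S.root) = S.geod S.root S.root :=
      S.geod_unique _ SimpleGraph.Walk.IsPath.nil
    rw [← hnil] at h
    exact hab h
  have hlen : 1 ≤ (S.geod a S.root).length := by
    rcases Nat.eq_zero_or_pos (S.geod a S.root).length with h0 | h1
    · exact absurd (SimpleGraph.Walk.eq_of_length_eq_zero h0) haroot
    · exact h1
  have hb : b ∈ (S.geod a S.root).support :=
    SimpleGraph.Walk.mem_support_iff_exists_getVert.2 ⟨1, h, hlen⟩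
  rw [S.geod_reverse a S.root, SimpleGraph.Walk.support_reverse, List.mem_reverse]
  exact hb

/-- Key fact: for a tree edge `e`, the edge `e(ι(e))` is `e` itself. -/
lemma eV_iota {e : Sym2 V} (heT : e ∈ S.T.edgeSet) : S.eV (S.iota e) = e := by
  set a := (Quot.out e).1 with ha
  set b := (Quot.out e).2 with hb
  have he : e = s(a, b) := by
    conv_lhs => rw [← Quot.out_eq e]
  have hadj : S.T.Adj a b := by
    rw [he] at heT
    exact heT
  have hab : a ≠ b := hadj.ne
  rcases S.parent_dichotomy hadj with h | h
  · -- b is the parent of a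
    have hbs : b ∈ (S.geod S.root a).support := S.mem_support_root_of_parent hab h
    have hwab : S.wedge a b = b := S.wedge_eq hbs
    have hnv : ¬ S.vle a b := by
      rintro (h1 | ⟨h2, h3⟩)
      · exact hab (hwab.symm.trans h1).symm
      · rw [hwab] at h3
        have hz : S.gfun b b = 0 := by simp [Setup.gfun]
        omega
    have hiota : S.iota e = a := by
      simp only [Setup.iota, ← ha, ← hb, if_neg hnv]
    rw [hiota, Setup.eV, h, ← he]
  · -- a is the parent of b
    have has : a ∈ (S.geod S.root b).support :=
      S.mem_support_root_of_parent (Ne.symm hab) h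
    have hw : S.wedge a b = a := S.wedge_eq' has
    have hv : S.vle a b := Or.inl hw
    have hiota : S.iota e = b := by
      simp only [Setup.iota, ← ha, ← hb, if_pos hv]
    rw [hiota, Setup.eV, h, he]
    exact Sym2.eq_swap

lemma tau_mem (e : Sym2 V) : S.tau e ∈ e := by
  rw [Setup.tau]
  split
  · exact Sym2.out_fst_mem e
  · exact Sym2.out_snd_mem e

end Setup

/-- **Order-respecting edges lemma (ii).**  Let `c` be a cell containing the edge `e` of
`T`, and let `c_ι` be obtained from `c` by replacing `e` with `ι(e)`.  An edge `e' ≠ e` of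
`c` is order-respecting in `c` iff it is order-respecting in `c_ι`. -/
theorem stmt2 {V : Type} [Fintype V] [DecidableEq V] (S : Setup V) (n : ℕ) (hn : 1 ≤ n) (hsub : S.SuffSubdiv n)
    (c : Finset (Sym2 V)) (hc : S.IsCell n c)
    (e : Sym2 V) (he : e ∈ c) (heT : e ∈ S.T.edgeSet)
    (e' : Sym2 V) (he' : e' ∈ c) (hne : e' ≠ e) (hedge : ¬ e'.IsDiag) :
    S.OrderResp c e' ↔ S.OrderResp (insert (Sym2.diag (S.iota e)) (c.erase e)) e' := by
  have hediag : ¬ e.IsDiag := S.T.not_isDiag_of_mem_edgeSet heT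
  constructor
  · rintro ⟨h1, h2, h3⟩
    refine ⟨Finset.mem_insert_of_mem (Finset.mem_erase.2 ⟨hne, he'⟩), h2, ?_⟩
    intro v hvroot hvmem hτ
    rcases Finset.mem_insert.1 hvmem with hv | hv
    · exfalso
      have hv' : v = S.iota e := Sym2.diag_injective hv
      rw [hv', S.eV_iota heT] at hτ
      exact hc.2.2 e' he' e he hne (S.tau e') (S.tau_mem e') hτ
    · exact h3 v hvroot (Finset.mem_of_mem_erase hv) hτ
  · rintro ⟨h1, h2, h3⟩
    refine ⟨he', h2, ?_⟩
    intro v hvroot hvmem hτ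
    have hvne : Sym2.diag v ≠ e := by
      intro hcon
      exact hediag (hcon ▸ Sym2.diag_isDiag v)
    exact h3 v hvroot (Finset.mem_insert_of_mem (Finset.mem_erase.2 ⟨hvne, hvmem⟩)) hτ

end GraphBraid
end
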